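/- The VC-dimension of EE_n : (Z_2^n × F_n) × (Z_2^n × F_n) → {0,1} is at least 2^n − 1. -/

import Mathlib

/-- Binary vectors of length `n` over `Z_2`. -/
abbrev V2 (n : ℕ) := Fin n → ZMod 2

/-- The Exchange Evaluation game: `EE_n(x,f,y,g) = f(y) ⊕ g(x)`. -/
def EE {n : ℕ} (x : V2 n) (f : V2 n → ZMod 2) (y : V2 n) (g : V2 n → ZMod 2) : ZMod 2 :=
  f y + g x

/-!
On a column `(y, 0)` Bob's function contributes nothing, so `EE_n(x, f, y, 0) = f(y)`. Since Alice's
`f` is only constrained at `0`, she can take `f` to be the indicator of any set of nonzero points,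
which shatters the `2^n - 1` columns `(y, 0)` with `y ≠ 0`.
-/

open Finset

lemma EE_zero_right {n : ℕ} (x : V2 n) (f : V2 n → ZMod 2) (y : V2 n) : EE x f y 0 = f y :=
  add_zero _

lemma exists_zmod_two_eq_one_iff_mem {Y : Type*} {a : Y} {R : Set Y} (ha : a ∉ R) :
    ∃ f : Y → ZMod 2, f a = 0 ∧ ∀ y, f y = 1 ↔ y ∈ R := by
  classical
  exact ⟨R.indicator 1, Set.indicator_of_notMem ha _, fun y => by
    by_cases hy : y ∈ R <;> simp [hy]⟩

def zeroColumns (n : ℕ) : Finset (V2 n × (V2 n → ZMod 2)) :=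
  (univ.erase 0).map ⟨fun y => (y, 0), fun _ _ h => (Prod.mk.inj h).1⟩

lemma mem_zeroColumns {n : ℕ} {p : V2 n × (V2 n → ZMod 2)} :
    p ∈ zeroColumns n ↔ p.1 ≠ 0 ∧ p.2 = 0 := by
  simp only [zeroColumns, mem_map, mem_erase, mem_univ, and_true]
  constructor
  · rintro ⟨y, hy, rfl⟩
    exact ⟨hy, rfl⟩
  · rintro ⟨hy, hg⟩
    exact ⟨p.1, hy, Prod.ext rfl hg.symm⟩

lemma card_zeroColumns (n : ℕ) : #(zeroColumns n) = 2 ^ n - 1 := by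
  simp [zeroColumns, card_erase_of_mem]

/-- The VC-dimension of `EE_n` (as a function of Alice's input `(x,f)`, with
columns indexed by Bob's input `(y,g) ∈ Z_2^n × F_n`) is at least `2^n − 1`:
there is a shattered set of columns of that size. -/
theorem stmt14 (n : ℕ) :
    ∃ S : Finset (V2 n × (V2 n → ZMod 2)),
      (∀ p ∈ S, p.2 0 = 0) ∧
      2 ^ n - 1 ≤ S.card ∧
      ∀ R ⊆ S, ∃ (x : V2 n) (f : V2 n → ZMod 2), f 0 = 0 ∧
        ∀ p ∈ S, (EE x f p.1 p.2 = 1 ↔ p ∈ R) := by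
  refine ⟨zeroColumns n, fun p hp => by rw [(mem_zeroColumns.1 hp).2]; rfl,
    (card_zeroColumns n).ge, fun R hR => ?_⟩
  obtain ⟨f, hf0, hf⟩ := exists_zmod_two_eq_one_iff_mem (R := {y | (y, 0) ∈ R})
    fun h => (mem_zeroColumns.1 (hR h)).1 rfl
  refine ⟨0, f, hf0, fun ⟨y, g⟩ hp => ?_⟩
  obtain rfl : g = 0 := (mem_zeroColumns.1 hp).2
  rw [EE_zero_right, hf]
  rfl
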